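/- Every set A in the accommodating set 𝔅̄ has the form A = (∪_{i=1}^{n_1} [v_i]_l) ∪ (∪_{j=1}^{n_2} ([u_j]_l)_sk) ∪ (∪_{k=1}^{n_3} ([w_k]_l ∖ ([w_k]_l)_sk)) for some vertices v_i, u_j, w_k ∈ Ω_0(E), some l ≥ 1, and some integers n_1, n_2, n_3 ≥ 0 (where an empty union is ∅). -/

import Mathlib

/-! # Common framework for labeled graph C*-algebras

Directed graphs, finite paths, labeled spaces `(E, L, 𝔅̄)` where `𝔅̄` is the
smallest accommodating set closed under relative complements (and containing
the sink parts of its members), loops and generalized loops, representations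
of labeled spaces in C*-algebras, gauge actions, infinite projections,
AF algebras, and closed two-sided ideals. -/

noncomputable section

/-- A directed graph with vertex set `V` and edge set `E`. -/
structure DirGraph (V : Type*) (E : Type*) where
  src : E → V
  rng : E → V

variable {V E 𝒜 : Type*}

/-- A (finite) path of positive length in a directed graph: a nonempty list of
composable edges. -/
structure GPath (G : DirGraph V E) where
  edges : List E
  ne : edges ≠ []
  chain : edges.Chain' fun e f => G.rng e = G.src f

namespace GPath

variable {G : DirGraph V E}

/-- The source vertex of a path. -/
def source (p : GPath G) : V := G.src (p.edges.head p.ne)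

/-- The range vertex of a path. -/
def range (p : GPath G) : V := G.rng (p.edges.getLast p.ne)

/-- The length of a path. -/
def length (p : GPath G) : ℕ := p.edges.length

/-- The label word of a path under a labeling `L`. -/
def label (L : E → 𝒜) (p : GPath G) : List 𝒜 := p.edges.map L

end GPath

/-- The set of sinks of a graph (vertices emitting no edge). -/
def DirGraph.sinks (G : DirGraph V E) : Set V := {v | ∀ e, G.src e ≠ v}

/-- `w ∈ L*(E)`: `w` is the label of some path of positive length. -/
def IsLabelWord (G : DirGraph V E) (L : E → 𝒜) (w : List 𝒜) : Prop :=
  ∃ p : GPath G, p.label L = w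

/-- The range `r(w)` of a labeled path `w`. -/
def rngW (G : DirGraph V E) (L : E → 𝒜) (w : List 𝒜) : Set V :=
  {v | ∃ p : GPath G, p.label L = w ∧ p.range = v}

/-- The relative range `r(A, w)` of a labeled path `w` with respect to `A`. -/
def relRng (G : DirGraph V E) (L : E → 𝒜) (A : Set V) (w : List 𝒜) : Set V :=
  {v | ∃ p : GPath G, p.label L = w ∧ p.source ∈ A ∧ p.range = v}

/-- `L(A E^n)`: labels of paths of length exactly `n` with source in `A`. -/
def labelsFromLen (G : DirGraph V E) (L : E → 𝒜) (A : Set V) (n : ℕ) : Set (List 𝒜) :=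
  {w | ∃ p : GPath G, p.source ∈ A ∧ p.length = n ∧ p.label L = w}

/-- `L(A E^{≤n})`: labels of paths of length between `1` and `n` with source in `A`. -/
def labelsFromLe (G : DirGraph V E) (L : E → 𝒜) (A : Set V) (n : ℕ) : Set (List 𝒜) :=
  {w | ∃ p : GPath G, p.source ∈ A ∧ p.length ≤ n ∧ p.label L = w}

/-- `L(A E^{≥n})`: labels of paths of length at least `n` (and at least `1`)
with source in `A`. -/
def labelsFromGe (G : DirGraph V E) (L : E → 𝒜) (A : Set V) (n : ℕ) : Set (List 𝒜) :=
  {w | ∃ p : GPath G, p.source ∈ A ∧ n ≤ p.length ∧ p.label L = w}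

/-- `L(E^n A)`: labels of paths of length exactly `n` with range in `A`. -/
def labelsToLen (G : DirGraph V E) (L : E → 𝒜) (n : ℕ) (A : Set V) : Set (List 𝒜) :=
  {w | ∃ p : GPath G, p.range ∈ A ∧ p.length = n ∧ p.label L = w}

/-- `L(E^{≤l} v)`: labels of paths of length between `1` and `l` with range `v`. -/
def labelsToLe (G : DirGraph V E) (L : E → 𝒜) (l : ℕ) (v : V) : Set (List 𝒜) :=
  {w | ∃ p : GPath G, p.range = v ∧ p.length ≤ l ∧ p.label L = w}

/-- `𝔅̄`: the smallest accommodating set for `(E, L)` (containing the ranges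
`r(α)` for `α ∈ L*(E)` and closed under relative ranges, finite intersections
and finite unions) that is moreover closed under relative complements and
contains `A_sk = A ∩ sinks` for every `A` belonging to it. -/
inductive Bbar (G : DirGraph V E) (L : E → 𝒜) : Set V → Prop
  | base (w : List 𝒜) (hw : IsLabelWord G L w) : Bbar G L (rngW G L w)
  | rel (A : Set V) (w : List 𝒜) (hA : Bbar G L A) (hw : IsLabelWord G L w) :
      Bbar G L (relRng G L A w)
  | inter (A B : Set V) (hA : Bbar G L A) (hB : Bbar G L B) : Bbar G L (A ∩ B)
  | union (A B : Set V) (hA : Bbar G L A) (hB : Bbar G L B) : Bbar G L (A ∪ B)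
  | diff (A B : Set V) (hA : Bbar G L A) (hB : Bbar G L B) : Bbar G L (A \ B)
  | sk (A : Set V) (hA : Bbar G L A) : Bbar G L (A ∩ G.sinks)

/-- The standing assumptions on a labeled space `(E, L, 𝔅̄)`: weakly
left-resolving, set-finite, receiver set-finite, and no sink is a source. -/
structure StandingAssumptions (G : DirGraph V E) (L : E → 𝒜) : Prop where
  wlr : ∀ A B : Set V, Bbar G L A → Bbar G L B → ∀ w : List 𝒜, IsLabelWord G L w →
    relRng G L A w ∩ relRng G L B w = relRng G L (A ∩ B) w
  setFinite : ∀ A : Set V, Bbar G L A → ∀ n : ℕ, 1 ≤ n → (labelsFromLen G L A n).Finite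
  receiverSetFinite : ∀ A : Set V, Bbar G L A → ∀ n : ℕ, 1 ≤ n → (labelsToLen G L n A).Finite
  sinkNotSource : ∀ v ∈ G.sinks, ∃ e, G.rng e = v

/-- The `n`-fold concatenation `w^n` of a word `w`. -/
def wordPow (w : List 𝒜) (n : ℕ) : List 𝒜 := (List.replicate n w).flatten

/-- A labeled path is repeatable if all its powers `w^n`, `n ≥ 1`, are again
labeled paths. -/
def Repeatable (G : DirGraph V E) (L : E → 𝒜) (w : List 𝒜) : Prop :=
  ∀ n : ℕ, 1 ≤ n → IsLabelWord G L (wordPow w n)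

/-- The generalized vertex `[v]_l`: all non-source vertices receiving exactly
the same labeled paths of length at most `l` as `v` does. -/
def gvtx (G : DirGraph V E) (L : E → 𝒜) (l : ℕ) (v : V) : Set V :=
  {u | (∃ e, G.rng e = u) ∧ labelsToLe G L l u = labelsToLe G L l v}

/-- A generalized loop at `A`: a labeled path `α ∈ L(A E^{≥1} A)`. -/
def IsGenLoop (G : DirGraph V E) (L : E → 𝒜) (A : Set V) (α : List 𝒜) : Prop :=
  ∃ p : GPath G, p.label L = α ∧ p.source ∈ A ∧ p.range ∈ A

/-- A loop at `A`: a generalized loop `α` at `A` such that `A ⊆ r(A, α)`. -/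
def IsLoop (G : DirGraph V E) (L : E → 𝒜) (A : Set V) (α : List 𝒜) : Prop :=
  IsGenLoop G L A α ∧ A ⊆ relRng G L A α

/-- The nonempty initial segments (initial paths) of a word `α`. -/
def initialSegs (α : List 𝒜) : Set (List 𝒜) := {w | w ≠ [] ∧ w <+: α}

/-- A loop `α` at `A` has an exit if (i) the initial segments of `α` form a
proper subset of `L(A E^{≤|α|})`, or (ii) `r(A, α_{[1,i]})` contains a sink for
some `1 ≤ i ≤ |α|`, or (iii) `A` is a proper subset of `r(A, α)`. -/
def HasExitLoop (G : DirGraph V E) (L : E → 𝒜) (A : Set V) (α : List 𝒜) : Prop :=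
  initialSegs α ⊂ labelsFromLe G L A α.length ∨
  (∃ k : ℕ, 1 ≤ k ∧ k ≤ α.length ∧ (relRng G L A (α.take k) ∩ G.sinks).Nonempty) ∨
  A ⊂ relRng G L A α

/-- `A_0 E^{≤K} A_1 ⋯ E^{≤K} A_m ≠ ∅`: existence of `m` consecutively
composable paths, each of length between `1` and `K`, the `j`-th going from
`As j` to `As (j+1)`. -/
def ChainExists (G : DirGraph V E) (As : ℕ → Set V) (K m : ℕ) : Prop :=
  ∃ xs : Fin m → GPath G,
    (∀ j : Fin m, (xs j).length ≤ K ∧ (xs j).source ∈ As j.val ∧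
      (xs j).range ∈ As (j.val + 1)) ∧
    ∀ (j : ℕ) (h : j + 1 < m),
      (xs ⟨j, Nat.lt_of_succ_lt h⟩).range = (xs ⟨j + 1, h⟩).source

/-- Same as `ChainExists` but with all paths of length exactly `K`
(i.e. `A_0 E^K A_1 ⋯ E^K A_m ≠ ∅`). -/
def ChainExistsExact (G : DirGraph V E) (As : ℕ → Set V) (K m : ℕ) : Prop :=
  ∃ xs : Fin m → GPath G,
    (∀ j : Fin m, (xs j).length = K ∧ (xs j).source ∈ As j.val ∧
      (xs j).range ∈ As (j.val + 1)) ∧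
    ∀ (j : ℕ) (h : j + 1 < m),
      (xs ⟨j, Nat.lt_of_succ_lt h⟩).range = (xs ⟨j + 1, h⟩).source

/-- Condition (a): for every finite family `A_1, …, A_N` in `𝔅̄` and every
`K ≥ 1` there is `m₀ ≥ 1` such that
`A_{i_1} E^{≤K} A_{i_2} ⋯ E^{≤K} A_{i_n} = ∅` (`n` sets, `n - 1` path factors)
for all `n > m₀` and all choices of indices. -/
def CondA (G : DirGraph V E) (L : E → 𝒜) : Prop :=
  ∀ (N : ℕ) (As : Fin N → Set V), (∀ i, Bbar G L (As i)) → ∀ K : ℕ, 1 ≤ K →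
    ∃ m0 : ℕ, 1 ≤ m0 ∧ ∀ n : ℕ, m0 < n → ∀ ι : ℕ → Fin N,
      ¬ ChainExists G (fun j => As (ι j)) K (n - 1)

/-- A word is agreeable (for level `l`) if it is of the form `β^k β'` with
`β, β' ∈ L(E^{≤l})` and `β'` a nonempty initial segment of `β`. -/
def AgreeableW (G : DirGraph V E) (L : E → 𝒜) (l : ℕ) (α : List 𝒜) : Prop :=
  ∃ (k : ℕ) (β β' : List 𝒜), IsLabelWord G L β ∧ IsLabelWord G L β' ∧
    β.length ≤ l ∧ β' ≠ [] ∧ β' <+: β ∧ α = wordPow β k ++ β'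

/-- A representation of the labeled space `(E, L, 𝔅̄)` in a (C*-)algebra `B`:
projections `p A`, `A ∈ 𝔅̄`, and partial isometries `s a`, `a ∈ 𝒜`, satisfying
the defining relations of a labeled graph C*-algebra. -/
structure LRep (G : DirGraph V E) (L : E → 𝒜) (B : Type*)
    [NonUnitalRing B] [StarRing B] where
  p : Set V → B
  s : 𝒜 → B
  p_empty : p ∅ = 0
  p_sa : ∀ A : Set V, Bbar G L A → star (p A) = p A
  p_mul : ∀ A A' : Set V, Bbar G L A → Bbar G L A' → p A * p A' = p (A ∩ A')
  p_union : ∀ A A' : Set V, Bbar G L A → Bbar G L A' →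
    p (A ∪ A') = p A + p A' - p (A ∩ A')
  s_pi : ∀ a : 𝒜, s a * star (s a) * s a = s a
  p_s : ∀ (A : Set V) (a : 𝒜), Bbar G L A → p A * s a = s a * p (relRng G L A [a])
  s_s : ∀ a : 𝒜, star (s a) * s a = p (rngW G L [a])
  s_orth : ∀ a b : 𝒜, a ≠ b → star (s a) * s b = 0
  ck : ∀ A : Set V, Bbar G L A →
    p A = (∑ᶠ a ∈ {a : 𝒜 | ∃ e, G.src e ∈ A ∧ L e = a},
      s a * p (relRng G L A [a]) * star (s a)) + p (A ∩ G.sinks)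

/-- `s_α` for a word `α`: the product of the partial isometries of its letters
(junk value `0` on the empty word, which is never used). -/
def sWord {B : Type*} [NonUnitalRing B] (s : 𝒜 → B) : List 𝒜 → B
  | [] => 0
  | [a] => s a
  | a :: b :: w => s a * sWord s (b :: w)

/-- The range of a word in `L^#(E)` (`none` is the empty word, with range all
of `E^0`). -/
def owordRng (G : DirGraph V E) (L : E → 𝒜) : Option (List 𝒜) → Set V
  | none => Set.univ
  | some w => rngW G L w

/-- The relative range of a word in `L^#(E)` with respect to `A` (`none` is
the empty word, with `r(A, ε) = A`). -/
def relRngE (G : DirGraph V E) (L : E → 𝒜) (A : Set V) : Option (List 𝒜) → Set V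
  | none => A
  | some w => relRng G L A w

/-- The element `s_α p_A s_β*` of a representation, where `α`, `β` are words in
`L^#(E)` (`none` being the empty word `ε` with `s_ε` the identity). -/
def LRep.elt {B : Type*} [NonUnitalRing B] [StarRing B] {G : DirGraph V E} {L : E → 𝒜}
    (rep : LRep G L B) : Option (List 𝒜) → Set V → Option (List 𝒜) → B
  | none, A, none => rep.p A
  | some α, A, none => sWord rep.s α * rep.p A
  | none, A, some β => rep.p A * star (sWord rep.s β)
  | some α, A, some β => sWord rep.s α * rep.p A * star (sWord rep.s β)

/-- A projection `q` is infinite if there is a partial isometry `u` with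
`u* u = q`, `u u* ≤ q` and `u u* ≠ q`. -/
def IsInfiniteProjection (B : Type*) [NonUnitalRing B] [StarRing B] [PartialOrder B]
    (q : B) : Prop :=
  star q = q ∧ q * q = q ∧ ∃ u : B, star u * u = q ∧ u * star u ≤ q ∧ u * star u ≠ q

/-- A C*-algebra is AF if every finite subset can be approximated within any
`ε > 0` from a finite-dimensional *-subalgebra. -/
def IsAFAlgebra (B : Type*) [NonUnitalNormedRing B] [StarRing B] [NormedSpace ℂ B] : Prop :=
  ∀ (F : Finset B) (ε : ℝ), 0 < ε →
    ∃ D : NonUnitalStarSubalgebra ℂ B, FiniteDimensional ℂ D ∧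
      ∀ x ∈ F, ∃ y ∈ (D : Set B), ‖x - y‖ < ε

/-- A gauge action for a representation: a strongly continuous action of the
circle group by *-automorphisms fixing the projections and scaling the
generating partial isometries. -/
structure GaugeAction {B : Type*} [NonUnitalCStarAlgebra B]
    (G : DirGraph V E) (L : E → 𝒜) (rep : LRep G L B) where
  γ : Circle → B ≃⋆ₐ[ℂ] B
  γ_mul : ∀ z w : Circle, γ (z * w) = (γ w).trans (γ z)
  γ_continuous : ∀ x : B, Continuous fun z => γ z x
  γ_s : ∀ (z : Circle) (a : 𝒜), γ z (rep.s a) = (z : ℂ) • rep.s a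
  γ_p : ∀ (z : Circle) (A : Set V), Bbar G L A → γ z (rep.p A) = rep.p A

/-- The representation generates `B` as a C*-algebra. -/
def GeneratesAlg {B : Type*} [NonUnitalCStarAlgebra B]
    (G : DirGraph V E) (L : E → 𝒜) (rep : LRep G L B) : Prop :=
  closure (NonUnitalStarAlgebra.adjoin ℂ
    ({x : B | ∃ a : 𝒜, x = rep.s a} ∪ {x : B | ∃ A : Set V, Bbar G L A ∧ x = rep.p A}) : Set B)
    = Set.univ

/-- A closed two-sided ideal of a C*-algebra (as a set). -/
def IsClosedTwoSidedIdealSet (B : Type*) [NonUnitalNormedRing B] [NormedSpace ℂ B]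
    (I : Set B) : Prop :=
  IsClosed I ∧ (0 : B) ∈ I ∧ (∀ x ∈ I, ∀ y ∈ I, x + y ∈ I) ∧
    (∀ (c : ℂ), ∀ x ∈ I, c • x ∈ I) ∧ ∀ x ∈ I, ∀ y : B, x * y ∈ I ∧ y * x ∈ I

/-- The closed two-sided ideal generated by an element. -/
def closedIdealGen (B : Type*) [NonUnitalNormedRing B] [NormedSpace ℂ B] (q : B) : Set B :=
  ⋂₀ {I : Set B | IsClosedTwoSidedIdealSet B I ∧ q ∈ I}

/-! By induction on `𝔅̄`, every `A ∈ 𝔅̄` is saturated at some level `l ≥ 1`: with any `z ∈ A`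
it contains every `u ∼_l z` that is a sink exactly when `z` is. The only nontrivial case is a
relative range `r(A, α)`, saturated at level `l + |α|`: if `u ∼_{l+|α|} z` and `z ∈ r(A, α)` is
reached from `x ∈ A`, weak left-resolvingness applied to the finitely many sets `r(β)`,
`β ∈ L(E^{≤l} x)`, yields a path labelled `α` into `u` whose source `y` receives every such `β`;
applied once more to `[x]_l ∈ 𝔅̄`, it shows that `y` receives no other word of length `≤ l`, so
`y ∼_l x`. Receiver set-finiteness leaves only finitely many classes `[z]_l` meeting `A`, so a
saturated `A` is the finite union of the sets `([z]_l)_sk` and `[z]_l ∖ ([z]_l)_sk` over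
representatives `z ∈ A`. -/

variable {G : DirGraph V E} {L : E → 𝒜}

namespace GPath

lemma length_pos (p : GPath G) : 0 < p.length :=
  List.length_pos_iff.mpr p.ne

lemma length_label (p : GPath G) : (p.label L).length = p.length :=
  List.length_map _

lemma label_ne_nil (p : GPath G) : p.label L ≠ [] := by
  simp [GPath.label, p.ne]

lemma range_mem_range (p : GPath G) : p.range ∈ Set.range G.rng :=
  ⟨_, rfl⟩

lemma source_notMem_sinks (p : GPath G) : p.source ∉ G.sinks :=
  fun h => h _ rfl

def single (e : E) : GPath G := ⟨[e], List.cons_ne_nil _ _, List.isChain_singleton _⟩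

def append (p q : GPath G) (h : p.range = q.source) : GPath G where
  edges := p.edges ++ q.edges
  ne := by simp [p.ne]
  chain := List.isChain_append.mpr ⟨p.chain, q.chain, by
    intro x hx y hy
    rw [List.getLast?_eq_some_getLast p.ne, Option.mem_some_iff] at hx
    rw [List.head?_eq_some_head q.ne, Option.mem_some_iff] at hy
    subst hx hy
    exact h⟩

lemma append_range (p q : GPath G) (h : p.range = q.source) :
    (p.append q h).range = q.range :=
  congrArg G.rng (List.getLast_append_of_ne_nil _ q.ne)

lemma append_label (p q : GPath G) (h : p.range = q.source) :
    (p.append q h).label L = p.label L ++ q.label L :=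
  List.map_append ..

lemma exists_split (p : GPath G) {β α : List 𝒜} (h : p.label L = β ++ α) (hβ : β ≠ [])
    (hα : α ≠ []) : ∃ q r : GPath G, q.label L = β ∧ r.label L = α ∧ q.range = r.source ∧
      r.range = p.range := by
  have hmap : p.edges.map L = β ++ α := h
  have htake : (p.edges.take β.length).map L = β := by
    rw [List.map_take, hmap, List.take_left' rfl]
  have hdrop : (p.edges.drop β.length).map L = α := by
    rw [List.map_drop, hmap, List.drop_left' rfl]
  have htake_ne : p.edges.take β.length ≠ [] := fun h0 => hβ (by rw [← htake, h0, List.map_nil])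
  have hdrop_ne : p.edges.drop β.length ≠ [] := fun h0 => hα (by rw [← hdrop, h0, List.map_nil])
  have hchain := p.chain
  rw [← List.take_append_drop β.length p.edges] at hchain
  obtain ⟨hchain_take, hchain_drop, hjoin⟩ := List.isChain_append.mp hchain
  exact ⟨⟨_, htake_ne, hchain_take⟩, ⟨_, hdrop_ne, hchain_drop⟩, htake, hdrop,
    hjoin _ (List.getLast?_eq_some_getLast htake_ne) _ (List.head?_eq_some_head hdrop_ne),
    congrArg G.rng (List.getLast_drop hdrop_ne)⟩

end GPath

lemma IsLabelWord.length_pos {w : List 𝒜} (hw : IsLabelWord G L w) : 0 < w.length := by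
  obtain ⟨p, rfl⟩ := hw
  exact p.length_label ▸ p.length_pos

section Words

variable {l : ℕ} {u v : V} {w β α : List 𝒜}

lemma isLabelWord_of_mem_rngW (h : v ∈ rngW G L w) : IsLabelWord G L w :=
  let ⟨p, hp, _⟩ := h; ⟨p, hp⟩

lemma ne_nil_of_mem_rngW (h : v ∈ rngW G L w) : w ≠ [] :=
  let ⟨p, hp, _⟩ := h; hp ▸ p.label_ne_nil

lemma mem_range_of_mem_rngW (h : v ∈ rngW G L w) : v ∈ Set.range G.rng :=
  let ⟨p, _, hp⟩ := h; hp ▸ p.range_mem_range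

lemma exists_mem_rngW_singleton (hv : v ∈ Set.range G.rng) : ∃ a, v ∈ rngW G L [a] := by
  obtain ⟨e, rfl⟩ := hv
  exact ⟨L e, GPath.single e, rfl, rfl⟩

lemma GPath.range_mem_rngW_append (p : GPath G) (h : p.source ∈ rngW G L β) :
    p.range ∈ rngW G L (β ++ p.label L) := by
  obtain ⟨q, hq, hqp⟩ := h
  exact ⟨q.append p hqp, by rw [GPath.append_label, hq], GPath.append_range ..⟩

lemma mem_relRng_of_mem_rngW_append (hβ : β ≠ []) (hα : α ≠ []) (h : v ∈ rngW G L (β ++ α)) :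
    v ∈ relRng G L (rngW G L β) α := by
  obtain ⟨p, hp, rfl⟩ := h
  obtain ⟨q, r, hq, hr, hqr, hrp⟩ := p.exists_split hp hβ hα
  exact ⟨r, hr, ⟨q, hq, hqr⟩, hrp⟩

lemma mem_labelsToLe_iff : w ∈ labelsToLe G L l v ↔ v ∈ rngW G L w ∧ w.length ≤ l := by
  constructor
  · rintro ⟨p, rfl, hlen, rfl⟩
    exact ⟨⟨p, rfl, rfl⟩, p.length_label ▸ hlen⟩
  · rintro ⟨⟨p, rfl, rfl⟩, hlen⟩
    exact ⟨p, rfl, p.length_label ▸ hlen, rfl⟩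

lemma labelsToLe_eq_labelsToLe_iff : labelsToLe G L l u = labelsToLe G L l v ↔
    ∀ w : List 𝒜, w.length ≤ l → (u ∈ rngW G L w ↔ v ∈ rngW G L w) := by
  simp only [Set.ext_iff, mem_labelsToLe_iff, and_congr_left_iff]

lemma mem_gvtx_iff : u ∈ gvtx G L l v ↔
    u ∈ Set.range G.rng ∧ ∀ w : List 𝒜, w.length ≤ l → (u ∈ rngW G L w ↔ v ∈ rngW G L w) :=
  and_congr_right fun _ => labelsToLe_eq_labelsToLe_iff

lemma mem_gvtx_self (hv : v ∈ Set.range G.rng) : v ∈ gvtx G L l v :=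
  ⟨hv, rfl⟩

lemma mem_gvtx_symm (hv : v ∈ Set.range G.rng) (h : u ∈ gvtx G L l v) : v ∈ gvtx G L l u :=
  ⟨hv, h.2.symm⟩

lemma gvtx_subset_gvtx {l' : ℕ} (h : l ≤ l') : gvtx G L l' v ⊆ gvtx G L l v := by
  intro u hu
  rw [mem_gvtx_iff] at hu ⊢
  exact ⟨hu.1, fun w hw => hu.2 w (hw.trans h)⟩

end Words

section Bbar

variable {A X : Set V} {ι : Type*} {B : ι → Set V} {s : Set ι}

lemma Bbar.subset_range (hA : Bbar G L A) : A ⊆ Set.range G.rng := by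
  induction hA with
  | base w _ => exact fun _ => mem_range_of_mem_rngW
  | rel A w _ _ _ => exact fun _ ⟨p, _, _, hp⟩ => hp ▸ p.range_mem_range
  | inter A B _ _ ih _ => exact Set.inter_subset_left.trans ih
  | union A B _ _ ihA ihB => exact Set.union_subset ihA ihB
  | diff A B _ _ ih _ => exact Set.sdiff_subset.trans ih
  | sk A _ ih => exact Set.inter_subset_left.trans ih

lemma Bbar.inter_biInter (hX : Bbar G L X) (hs : s.Finite) (hB : ∀ i ∈ s, Bbar G L (B i)) :
    Bbar G L (X ∩ ⋂ i ∈ s, B i) := by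
  refine Set.Finite.induction_on_subset (motive := fun t _ => Bbar G L (X ∩ ⋂ i ∈ t, B i))
    s hs (by simpa using hX) ?_
  intro a t ha _ _ ih
  rw [Set.biInter_insert, Set.inter_left_comm]
  exact Bbar.inter _ _ (hB a ha) ih

lemma Bbar.sdiff_biUnion (hX : Bbar G L X) (hs : s.Finite) (hB : ∀ i ∈ s, Bbar G L (B i)) :
    Bbar G L (X \ ⋃ i ∈ s, B i) := by
  refine Set.Finite.induction_on_subset (motive := fun t _ => Bbar G L (X \ ⋃ i ∈ t, B i))
    s hs (by simpa using hX) ?_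
  intro a t ha _ _ ih
  rw [Set.biUnion_insert, Set.union_comm, ← Set.sdiff_sdiff]
  exact Bbar.diff _ _ ih (hB a ha)

lemma StandingAssumptions.relRng_inter_biInter (sa : StandingAssumptions G L) {α : List 𝒜}
    (hα : IsLabelWord G L α) (hX : Bbar G L X) (hs : s.Finite) (hB : ∀ i ∈ s, Bbar G L (B i)) :
    relRng G L (X ∩ ⋂ i ∈ s, B i) α = relRng G L X α ∩ ⋂ i ∈ s, relRng G L (B i) α := by
  refine Set.Finite.induction_on_subset (motive := fun t _ =>
    relRng G L (X ∩ ⋂ i ∈ t, B i) α = relRng G L X α ∩ ⋂ i ∈ t, relRng G L (B i) α)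
    s hs (by simp) ?_
  intro a t ha hts _ ih
  rw [Set.biInter_insert, Set.biInter_insert, Set.inter_left_comm,
    ← sa.wlr _ _ (hB a ha) (hX.inter_biInter (hs.subset hts) fun i hi => hB i (hts hi)) α hα,
    ih, Set.inter_left_comm]

end Bbar

section Finiteness

variable {X : Set V}

lemma finite_biUnion_labelsToLe (sa : StandingAssumptions G L) (hX : Bbar G L X) (l : ℕ) :
    (⋃ x ∈ X, labelsToLe G L l x).Finite := by
  refine ((Set.finite_Icc 1 l).biUnion fun n hn => sa.receiverSetFinite X hX n hn.1).subset ?_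
  simp only [Set.iUnion_subset_iff]
  rintro x hx _ ⟨p, rfl, hlen, rfl⟩
  exact Set.mem_biUnion ⟨p.length_pos, hlen⟩ ⟨p, hx, rfl, rfl⟩

lemma finite_labelsToLe (sa : StandingAssumptions G L) (hX : Bbar G L X) (l : ℕ) {v : V}
    (hv : v ∈ X) : (labelsToLe G L l v).Finite :=
  (finite_biUnion_labelsToLe sa hX l).subset (Set.subset_biUnion_of_mem hv)

lemma finite_image_labelsToLe (sa : StandingAssumptions G L) (hX : Bbar G L X) (l : ℕ) :
    (labelsToLe G L l '' X).Finite :=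
  (finite_biUnion_labelsToLe sa hX l).finite_subsets.subset <| by
    rintro _ ⟨v, hv, rfl⟩
    exact Set.subset_biUnion_of_mem hv

end Finiteness

section GeneralizedVertices

variable {l : ℕ} {v : V} {a : 𝒜}

lemma gvtx_eq (hl : 1 ≤ l) (hv : v ∈ rngW G L [a]) :
    gvtx G L l v = (rngW G L [a] ∩ ⋂ β ∈ labelsToLe G L l v, rngW G L β) \
      ⋃ β ∈ (⋃ y ∈ rngW G L [a], labelsToLe G L l y) \ labelsToLe G L l v, rngW G L β := by
  ext x
  simp only [mem_gvtx_iff, Set.mem_sdiff, Set.mem_inter_iff, Set.mem_iInter₂, Set.mem_iUnion₂,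
    mem_labelsToLe_iff, exists_prop, not_exists, not_and, and_imp]
  constructor
  · rintro ⟨-, hxv⟩
    refine ⟨⟨(hxv [a] hl).2 hv, fun β hvβ hβ => (hxv β hβ).2 hvβ⟩, ?_⟩
    rintro β ⟨y, -, -, hβ⟩ hvβ hxβ
    exact hvβ ((hxv β hβ).1 hxβ) hβ
  · rintro ⟨⟨hxa, hxF⟩, hxD⟩
    refine ⟨mem_range_of_mem_rngW hxa, fun β hβ => ⟨fun hxβ => ?_, fun hvβ => hxF β hvβ hβ⟩⟩
    by_contra hvβ
    exact hxD β ⟨x, hxa, hxβ, hβ⟩ (fun h _ => hvβ h) hxβ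

lemma gvtx_mem_Bbar (sa : StandingAssumptions G L) (hl : 1 ≤ l) (hv : v ∈ Set.range G.rng) :
    Bbar G L (gvtx G L l v) := by
  obtain ⟨a, hva⟩ := exists_mem_rngW_singleton (L := L) hv
  have hBa : Bbar G L (rngW G L [a]) := Bbar.base _ (isLabelWord_of_mem_rngW hva)
  rw [gvtx_eq hl hva]
  refine (hBa.inter_biInter (finite_labelsToLe sa hBa l hva) fun β hβ => ?_).sdiff_biUnion
    ((finite_biUnion_labelsToLe sa hBa l).sdiff) fun β hβ => ?_
  · exact Bbar.base _ (isLabelWord_of_mem_rngW (mem_labelsToLe_iff.mp hβ).1)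
  · obtain ⟨y, -, hyβ⟩ := Set.mem_iUnion₂.mp hβ.1
    exact Bbar.base _ (isLabelWord_of_mem_rngW (mem_labelsToLe_iff.mp hyβ).1)

end GeneralizedVertices

lemma StandingAssumptions.mem_relRng_gvtx (sa : StandingAssumptions G L) {l : ℕ} {x z u : V}
    {α : List 𝒜} (hl : 1 ≤ l) (hx : x ∈ Set.range G.rng)
    (hz : z ∈ relRng G L (gvtx G L l x) α) (hu : u ∈ gvtx G L (l + α.length) z) :
    u ∈ relRng G L (gvtx G L l x) α := by
  obtain ⟨p, hpα, hpx, hpz⟩ := hz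
  have hα : IsLabelWord G L α := ⟨p, hpα⟩
  have hα_ne : α ≠ [] := hpα ▸ p.label_ne_nil
  have transfer : ∀ β : List 𝒜, β.length ≤ l →
      (u ∈ rngW G L (β ++ α) ↔ z ∈ rngW G L (β ++ α)) := fun β hβ =>
    (mem_gvtx_iff.mp hu).2 _ (by rw [List.length_append]; omega)
  have hu_F : ∀ β ∈ labelsToLe G L l x, u ∈ relRng G L (rngW G L β) α := by
    intro β hβ
    rw [mem_labelsToLe_iff] at hβ
    have hz_βα := p.range_mem_rngW_append (((mem_gvtx_iff.mp hpx).2 β hβ.2).2 hβ.1)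
    rw [hpα, hpz] at hz_βα
    exact mem_relRng_of_mem_rngW_append (ne_nil_of_mem_rngW hβ.1) hα_ne
      ((transfer β hβ.2).2 hz_βα)
  obtain ⟨a, hxa⟩ := exists_mem_rngW_singleton (L := L) hx
  have hBa : Bbar G L (rngW G L [a]) := Bbar.base _ (isLabelWord_of_mem_rngW hxa)
  have hu_P : u ∈ relRng G L (rngW G L [a] ∩ ⋂ β ∈ labelsToLe G L l x, rngW G L β) α := by
    rw [sa.relRng_inter_biInter hα hBa (finite_labelsToLe sa hBa l hxa) fun β hβ =>
      Bbar.base _ (isLabelWord_of_mem_rngW (mem_labelsToLe_iff.mp hβ).1)]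
    exact ⟨hu_F [a] (mem_labelsToLe_iff.mpr ⟨hxa, hl⟩), Set.mem_iInter₂.mpr hu_F⟩
  obtain ⟨μ, hμα, ⟨hya, hyF⟩, rfl⟩ := hu_P
  refine ⟨μ, hμα, mem_gvtx_iff.mpr ⟨mem_range_of_mem_rngW hya, fun w hw => ⟨fun hyw => ?_,
    fun hxw => Set.mem_iInter₂.mp hyF w (mem_labelsToLe_iff.mpr ⟨hxw, hw⟩)⟩⟩, rfl⟩
  -- `w α` reaches `u` through `y`, hence reaches `z`; weak left-resolvingness then puts the
  -- source of a path labelled `α` into `z` in both `r(w)` and `[x]_l`.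
  have hzw : z ∈ relRng G L (rngW G L w) α :=
    mem_relRng_of_mem_rngW_append (ne_nil_of_mem_rngW hyw) hα_ne
      ((transfer w hw).1 (hμα ▸ μ.range_mem_rngW_append hyw))
  obtain ⟨q, -, ⟨hqw, hqx⟩, -⟩ : z ∈ relRng G L (rngW G L w ∩ gvtx G L l x) α := by
    rw [← sa.wlr _ _ (Bbar.base _ (isLabelWord_of_mem_rngW hyw)) (gvtx_mem_Bbar sa hl hx) α hα]
    exact ⟨hzw, p, hpα, hpx, hpz⟩
  exact ((mem_gvtx_iff.mp hqx).2 w hw).1 hqw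

def IsSaturated (G : DirGraph V E) (L : E → 𝒜) (l : ℕ) (A : Set V) : Prop :=
  ∀ z ∈ A, ∀ u ∈ gvtx G L l z, (u ∈ G.sinks ↔ z ∈ G.sinks) → u ∈ A

namespace IsSaturated

variable {l : ℕ} {A B : Set V}

lemma rngW (w : List 𝒜) : IsSaturated G L w.length (rngW G L w) :=
  fun _ hz _ hu _ => ((mem_gvtx_iff.mp hu).2 w le_rfl).2 hz

lemma mono {l' : ℕ} (h : l ≤ l') (hA : IsSaturated G L l A) : IsSaturated G L l' A :=
  fun z hz u hu => hA z hz u (gvtx_subset_gvtx h hu)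

lemma inter (hA : IsSaturated G L l A) (hB : IsSaturated G L l B) :
    IsSaturated G L l (A ∩ B) :=
  fun z hz u hu hs => ⟨hA z hz.1 u hu hs, hB z hz.2 u hu hs⟩

lemma union (hA : IsSaturated G L l A) (hB : IsSaturated G L l B) :
    IsSaturated G L l (A ∪ B) := by
  rintro z (hz | hz) u hu hs
  exacts [Or.inl (hA z hz u hu hs), Or.inr (hB z hz u hu hs)]

lemma sdiff (hA : IsSaturated G L l A) (hB : IsSaturated G L l B)
    (hA_range : A ⊆ Set.range G.rng) : IsSaturated G L l (A \ B) :=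
  fun z hz u hu hs => ⟨hA z hz.1 u hu hs,
    fun huB => hz.2 (hB u huB z (mem_gvtx_symm (hA_range hz.1) hu) hs.symm)⟩

lemma inter_sinks (hA : IsSaturated G L l A) : IsSaturated G L l (A ∩ G.sinks) :=
  fun z hz u hu hs => ⟨hA z hz.1 u hu hs, hs.2 hz.2⟩

lemma relRng (sa : StandingAssumptions G L) (hA : Bbar G L A) (hl : 1 ≤ l)
    (hsat : IsSaturated G L l A) (α : List 𝒜) :
    IsSaturated G L (l + α.length) (relRng G L A α) := by
  rintro z ⟨p, hpα, hxA, hpz⟩ u hu -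
  have hx := hA.subset_range hxA
  obtain ⟨μ, hμα, hy, hμu⟩ := sa.mem_relRng_gvtx hl hx ⟨p, hpα, mem_gvtx_self hx, hpz⟩ hu
  exact ⟨μ, hμα, hsat _ hxA _ hy (iff_of_false μ.source_notMem_sinks p.source_notMem_sinks),
    hμu⟩

lemma exists_common_level (hA : ∃ l, 1 ≤ l ∧ IsSaturated G L l A)
    (hB : ∃ l, 1 ≤ l ∧ IsSaturated G L l B) :
    ∃ l, 1 ≤ l ∧ IsSaturated G L l A ∧ IsSaturated G L l B :=
  let ⟨l₁, hl₁, h₁⟩ := hA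
  let ⟨l₂, _, h₂⟩ := hB
  ⟨max l₁ l₂, hl₁.trans (le_max_left _ _), h₁.mono (le_max_left _ _),
    h₂.mono (le_max_right _ _)⟩

end IsSaturated

lemma Bbar.exists_isSaturated (sa : StandingAssumptions G L) {A : Set V} (hA : Bbar G L A) :
    ∃ l, 1 ≤ l ∧ IsSaturated G L l A := by
  induction hA with
  | base w hw => exact ⟨w.length, hw.length_pos, IsSaturated.rngW w⟩
  | rel A w hA _ ih =>
    obtain ⟨l, hl, h⟩ := ih
    exact ⟨l + w.length, by omega, h.relRng sa hA hl w⟩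
  | inter A B _ _ ihA ihB =>
    obtain ⟨l, hl, hA, hB⟩ := IsSaturated.exists_common_level ihA ihB
    exact ⟨l, hl, hA.inter hB⟩
  | union A B _ _ ihA ihB =>
    obtain ⟨l, hl, hA, hB⟩ := IsSaturated.exists_common_level ihA ihB
    exact ⟨l, hl, hA.union hB⟩
  | diff A B hA' _ ihA ihB =>
    obtain ⟨l, hl, hA, hB⟩ := IsSaturated.exists_common_level ihA ihB
    exact ⟨l, hl, hA.sdiff hB hA'.subset_range⟩
  | sk A _ ih =>
    obtain ⟨l, hl, h⟩ := ih
    exact ⟨l, hl, h.inter_sinks⟩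

lemma exists_fin_reps_of_finite_image {α β : Type*} (f : α → β) {s : Set α}
    (h : (f '' s).Finite) :
    ∃ (n : ℕ) (g : Fin n → α), (∀ i, g i ∈ s) ∧ ∀ x ∈ s, ∃ i, f (g i) = f x := by
  have := h.to_subtype
  obtain ⟨n, ⟨e⟩⟩ := Finite.exists_equiv_fin (f '' s)
  choose g hgs hgf using fun i : Fin n => (e.symm i).2
  exact ⟨n, g, hgs, fun x hx => ⟨e ⟨f x, x, hx, rfl⟩, by rw [hgf, e.symm_apply_apply]⟩⟩

lemma inter_eq_iUnion_gvtx_inter {l : ℕ} {A S : Set V} (hA : A ⊆ Set.range G.rng)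
    (hfin : (labelsToLe G L l '' A).Finite)
    (hsat : ∀ z ∈ A ∩ S, ∀ u ∈ gvtx G L l z ∩ S, u ∈ A) :
    ∃ (n : ℕ) (g : Fin n → V), (∀ i, g i ∈ A) ∧ A ∩ S = ⋃ i, gvtx G L l (g i) ∩ S := by
  obtain ⟨n, g, hgA, hg⟩ :=
    exists_fin_reps_of_finite_image (labelsToLe G L l)
      (hfin.subset (Set.image_mono Set.inter_subset_left))
  refine ⟨n, g, fun i => (hgA i).1, Set.Subset.antisymm (fun x hx => ?_) ?_⟩
  · obtain ⟨i, hi⟩ := hg x hx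
    exact Set.mem_iUnion.mpr ⟨i, ⟨hA hx.1, hi.symm⟩, hx.2⟩
  · exact Set.iUnion_subset fun i x hx => ⟨hsat _ (hgA i) x hx, hx.2⟩

theorem Bbar_decomposition_general {V E 𝒜 : Type*}
    (G : DirGraph V E) (L : E → 𝒜)
    (sa : StandingAssumptions G L) (A : Set V) (hA : Bbar G L A) :
    ∃ (l n₁ n₂ n₃ : ℕ) (vs : Fin n₁ → V) (us : Fin n₂ → V) (ws : Fin n₃ → V),
      1 ≤ l ∧
      (∀ i, ∃ e, G.rng e = vs i) ∧
      (∀ j, ∃ e, G.rng e = us j) ∧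
      (∀ k, ∃ e, G.rng e = ws k) ∧
      A = (⋃ i, gvtx G L l (vs i)) ∪ (⋃ j, gvtx G L l (us j) ∩ G.sinks) ∪
          (⋃ k, gvtx G L l (ws k) \ G.sinks) := by
  obtain ⟨l, hl, hsat⟩ := hA.exists_isSaturated sa
  have hfin := finite_image_labelsToLe sa hA l
  obtain ⟨n₂, us, husA, hsinks⟩ := inter_eq_iUnion_gvtx_inter (S := G.sinks) hA.subset_range hfin
    fun z hz u hu => hsat z hz.1 u hu.1 (iff_of_true hu.2 hz.2)
  obtain ⟨n₃, ws, hwsA, hnonsinks⟩ := inter_eq_iUnion_gvtx_inter (S := G.sinksᶜ)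
    hA.subset_range hfin fun z hz u hu => hsat z hz.1 u hu.1 (iff_of_false hu.2 hz.2)
  refine ⟨l, 0, n₂, n₃, Fin.elim0, us, ws, hl, fun i => i.elim0,
    fun j => hA.subset_range (husA j), fun k => hA.subset_range (hwsA k), ?_⟩
  rw [Set.iUnion_of_empty, Set.empty_union, ← hsinks]
  exact (Set.inter_union_compl A G.sinks).symm.trans (congrArg _ hnonsinks)

/-- Proposition 2.2. Every set `A ∈ 𝔅̄` is a finite union of
generalized vertices `[v]_l`, sink parts `([u]_l)_sk` and non-sink parts
`[w]_l ∖ ([w]_l)_sk`, for vertices in `Ω₀(E)` and some `l ≥ 1`. -/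
theorem Bbar_decomposition {V E 𝒜 : Type*} [Countable V] [Countable E] [Countable 𝒜]
    (G : DirGraph V E) (L : E → 𝒜) (hL : Function.Surjective L)
    (sa : StandingAssumptions G L) (A : Set V) (hA : Bbar G L A) :
    ∃ (l n₁ n₂ n₃ : ℕ) (vs : Fin n₁ → V) (us : Fin n₂ → V) (ws : Fin n₃ → V),
      1 ≤ l ∧
      (∀ i, ∃ e, G.rng e = vs i) ∧
      (∀ j, ∃ e, G.rng e = us j) ∧
      (∀ k, ∃ e, G.rng e = ws k) ∧
      A = (⋃ i, gvtx G L l (vs i)) ∪ (⋃ j, gvtx G L l (us j) ∩ G.sinks) ∪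
          (⋃ k, gvtx G L l (ws k) \ G.sinks) :=
  Bbar_decomposition_general G L sa A hA

end
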